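/- Let ((t_i, B_i))_{i ∈ I} be a finite family of tag–slot-set pairs such that the tags t_i are pairwise distinct and the slot-sets B_i are pairwise disjoint. Let (t, A) be a pair with |A| ≤ P. Then the number of indices i ∈ I such that B_i ∩ A ≠ ∅ or t_i = t is at most P + 1. In other words, a greedy pair (t, A) with |A| ≤ P* can impede at most P* + 1 pairs of the optimal solution, including the pair with its own tag. -/

import Mathlib

/-- Let `((t_i, B_i))_{i ∈ I}` be a finite family of tag–slot-set
pairs with pairwise distinct tags and pairwise disjoint slot-sets.  Let
`(t, A)` be a pair with `|A| ≤ P`.  Then the number of indices `i ∈ I` such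
that `B_i ∩ A ≠ ∅` or `t_i = t` is at most `P + 1`: a greedy pair impedes at
most `P + 1` optimal pairs, including the pair with its own tag. -/
theorem card_impeded_le {α ι σ : Type*} [DecidableEq α] [DecidableEq σ]
    (I : Finset ι) (ts : ι → σ) (Bs : ι → Finset α)
    (htags : ∀ i ∈ I, ∀ j ∈ I, i ≠ j → ts i ≠ ts j)
    (hdisj : ∀ i ∈ I, ∀ j ∈ I, i ≠ j → Disjoint (Bs i) (Bs j))
    (t : σ) (A : Finset α) (P : ℕ) (hA : A.card ≤ P) :
    (I.filter fun i => (Bs i ∩ A).Nonempty ∨ ts i = t).card ≤ P + 1 := by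
  classical
  have hsub : (I.filter fun i => (Bs i ∩ A).Nonempty ∨ ts i = t) ⊆
      (I.filter fun i => (Bs i ∩ A).Nonempty) ∪ (I.filter fun i => ts i = t) := by
    intro i hi
    simp only [Finset.mem_filter, Finset.mem_union] at hi ⊢
    tauto
  refine le_trans (Finset.card_le_card hsub) (le_trans (Finset.card_union_le _ _) ?_)
  have h1 : (I.filter fun i => (Bs i ∩ A).Nonempty).card ≤ P := by
    rcases (I.filter fun i => (Bs i ∩ A).Nonempty).eq_empty_or_nonempty with he | ⟨i0, hi0⟩
    · simp [he]
    · have hα : Nonempty α := by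
        simp only [Finset.mem_filter] at hi0
        exact ⟨hi0.2.choose⟩
      refine le_trans ?_ hA
      refine Finset.card_le_card_of_injOn
        (fun i => if h : (Bs i ∩ A).Nonempty then h.choose else Classical.arbitrary α)
        ?_ ?_
      · intro i hi
        simp only [Finset.mem_coe, Finset.mem_filter] at hi
        simp only [dif_pos hi.2]
        exact (Finset.mem_inter.1 hi.2.choose_spec).2
      · intro i hi j hj hij
        simp only [Finset.coe_filter, Set.mem_setOf_eq] at hi hj
        simp only [dif_pos hi.2, dif_pos hj.2] at hij
        by_contra hne
        exact Finset.disjoint_left.1 (hdisj i hi.1 j hj.1 hne)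
          (Finset.mem_inter.1 hi.2.choose_spec).1
          (hij ▸ (Finset.mem_inter.1 hj.2.choose_spec).1)
  have h2 : (I.filter fun i => ts i = t).card ≤ 1 := by
    refine Finset.card_le_one.2 ?_
    intro i hi j hj
    simp only [Finset.mem_filter] at hi hj
    by_contra hne
    exact htags i hi.1 j hj.1 hne (hi.2.trans hj.2.symm)
  omega
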